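/- arXiv:1802.07987 — 2 statements merged into one kernel-verified Lean document; each statement's English description precedes it below -/
import Mathlib

section
/- Let v₃ > 0, λ > v₃/2 and let (y, z, θ) solve y' = cos θ, z' = sin θ, θ' = 2λ + v₃ cos θ with θ(0) = 0. Then θ'(s) ≥ 2λ − v₃ > 0 for all s, θ is strictly increasing, lim_{s→±∞} θ(s) = ±∞, and if T > 0 is the unique value with θ(T) = 2π, then for all s: y(s + T) = y(s) + y(T), z(s + T) = z(s), θ(s + T) = θ(s) + 2π. In particular the curve (y, z) is invariant under the horizontal translation by (y(T), 0). -/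
/-!
Since `|cos| ≤ 1`, `θ' ≥ 2λ - v₃ > 0`, so `θ` grows at least linearly in both directions and
takes the value `2π` exactly once. The equation for `θ` is autonomous with a `2π`-periodic
right-hand side, so `s ↦ θ (s + T) - 2π` solves it with the same value at `0`, and uniqueness
gives `θ (s + T) = θ s + 2π`. Hence `y' = cos θ` and `z' = sin θ` are `T`-periodic, which makes
`y (s + T) - y s` constant. For `z` the constant vanishes because `v₃ z + log (2λ + v₃ cos θ)`
is a first integral.
-/

open Filter Function Real

section DerivLowerBound

variable {f f' : ℝ → ℝ} {c : ℝ}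

theorem monotone_sub_mul_of_hasDerivAt_ge (hf : ∀ s, HasDerivAt f (f' s) s) (hc : ∀ s, c ≤ f' s) :
    Monotone fun s => f s - c * s :=
  monotone_of_hasDerivAt_nonneg (fun s => (hf s).sub ((hasDerivAt_id s).const_mul c))
    fun s => by simpa using hc s

theorem tendsto_atTop_of_hasDerivAt_ge (hc₀ : 0 < c) (hf : ∀ s, HasDerivAt f (f' s) s)
    (hc : ∀ s, c ≤ f' s) : Tendsto f atTop atTop := by
  have hmono := monotone_sub_mul_of_hasDerivAt_ge hf hc
  refine (tendsto_atTop_add_left_of_le' _ (f 0 - c * 0) (eventually_ge_atTop 0 |>.mono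
    fun s hs => hmono hs) (tendsto_id.const_mul_atTop hc₀)).congr fun s => ?_
  simp

theorem tendsto_atBot_of_hasDerivAt_ge (hc₀ : 0 < c) (hf : ∀ s, HasDerivAt f (f' s) s)
    (hc : ∀ s, c ≤ f' s) : Tendsto f atBot atBot := by
  have hmono := monotone_sub_mul_of_hasDerivAt_ge hf hc
  refine (tendsto_atBot_add_left_of_ge' _ (f 0 - c * 0) (eventually_le_atBot 0 |>.mono
    fun s hs => hmono hs) (tendsto_id.const_mul_atBot hc₀)).congr fun s => ?_
  simp

end DerivLowerBound

theorem lipschitzWith_const_add_mul_cos (a v : ℝ) :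
    LipschitzWith ‖v‖₊ fun x => a + v * cos x := by
  simpa using (LipschitzWith.const a).add ((lipschitzWith_smul v).comp lipschitzWith_cos)

theorem add_period_of_hasDerivAt_periodic {F θ : ℝ → ℝ} {K : NNReal} {c T : ℝ}
    (hF : LipschitzWith K F) (hFc : Periodic F c) (hθ : ∀ s, HasDerivAt θ (F (θ s)) s)
    (hT : θ T = θ 0 + c) (s : ℝ) : θ (s + T) = θ s + c := by
  have hshift : ∀ t, HasDerivAt (fun t => θ (t + T) - c) (F (θ (t + T) - c)) t := fun t => by
    simpa [hFc.sub_eq] using ((hθ (t + T)).comp_add_const t T).sub_const c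
  have := ODE_solution_unique_univ (v := fun _ => F) (s := fun _ => Set.univ) (t₀ := 0)
    (fun _ => hF.lipschitzOnWith) (fun t => ⟨hshift t, trivial⟩) (fun t => ⟨hθ t, trivial⟩)
    (by simp [hT])
  linarith [congrFun this s]

theorem sub_eq_of_hasDerivAt_comp_periodic {f d θ : ℝ → ℝ} {c T : ℝ}
    (hf : ∀ s, HasDerivAt f (d (θ s)) s) (hd : Periodic d c) (hθ : ∀ s, θ (s + T) = θ s + c)
    (s : ℝ) : f (s + T) - f s = f T - f 0 := by
  have hderiv : ∀ u, HasDerivAt (fun u => f (u + T) - f u) 0 u := fun u => by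
    have h := ((hf (u + T)).comp_add_const u T).sub (hf u)
    rwa [hθ, hd (θ u), sub_self] at h
  simpa using is_const_of_deriv_eq_zero (fun u => (hderiv u).differentiableAt)
    (fun u => (hderiv u).deriv) s 0

theorem mul_add_log_eq_of_hasDerivAt {a v : ℝ} {z θ : ℝ → ℝ}
    (hz : ∀ s, HasDerivAt z (sin (θ s)) s) (hθ : ∀ s, HasDerivAt θ (a + v * cos (θ s)) s)
    (hpos : ∀ s, 0 < a + v * cos (θ s)) (s t : ℝ) :
    v * z s + log (a + v * cos (θ s)) = v * z t + log (a + v * cos (θ t)) := by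
  have hderiv : ∀ u, HasDerivAt (fun u => v * z u + log (a + v * cos (θ u))) 0 u := fun u => by
    have hspeed := (((hasDerivAt_cos (θ u)).comp u (hθ u)).const_mul v).const_add a
    refine (((hz u).const_mul v).add (hspeed.log (hpos u).ne')).congr_deriv ?_
    simp only [comp_apply]
    field_simp [(hpos u).ne']
    ring
  exact is_const_of_deriv_eq_zero (fun u => (hderiv u).differentiableAt)
    (fun u => (hderiv u).deriv) s t

theorem stmt6_general (lam v₃ : ℝ) (hv : 0 < v₃) (hlam : v₃ / 2 < lam)
    (y z θ : ℝ → ℝ)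
    (hy : ∀ s, HasDerivAt y (Real.cos (θ s)) s)
    (hz : ∀ s, HasDerivAt z (Real.sin (θ s)) s)
    (hθ : ∀ s, HasDerivAt θ (2*lam + v₃ * Real.cos (θ s)) s)
    (hy0 : y 0 = 0) (hθ0 : θ 0 = 0) :
    (0 < 2*lam - v₃) ∧
    (∀ s, 2*lam - v₃ ≤ 2*lam + v₃ * Real.cos (θ s)) ∧
    StrictMono θ ∧
    Tendsto θ atTop atTop ∧ Tendsto θ atBot atBot ∧
    (∃! T : ℝ, 0 < T ∧ θ T = 2 * Real.pi) ∧
    (∀ T : ℝ, 0 < T → θ T = 2 * Real.pi →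
      ∀ s, y (s + T) = y s + y T ∧ z (s + T) = z s ∧ θ (s + T) = θ s + 2 * Real.pi) := by
  have hc : 0 < 2*lam - v₃ := by linarith
  have hbd : ∀ s, 2*lam - v₃ ≤ 2*lam + v₃ * cos (θ s) := fun s => by
    nlinarith [neg_one_le_cos (θ s)]
  have hpos : ∀ s, 0 < 2*lam + v₃ * cos (θ s) := fun s => hc.trans_le (hbd s)
  have hmono : StrictMono θ := strictMono_of_hasDerivAt_pos hθ hpos
  have htop := tendsto_atTop_of_hasDerivAt_ge hc hθ hbd
  have hbot := tendsto_atBot_of_hasDerivAt_ge hc hθ hbd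
  refine ⟨hc, hbd, hmono, htop, hbot, ?_, fun T _ hT s => ?_⟩
  · obtain ⟨T, hT⟩ := (continuous_iff_continuousAt.2 fun s => (hθ s).continuousAt).surjective
      htop hbot (2 * π)
    refine ⟨T, ⟨hmono.lt_iff_lt.1 ?_, hT⟩, fun T' hT' => hmono.injective (hT'.2.trans hT.symm)⟩
    rw [hθ0, hT]
    positivity
  have hθT : ∀ t, θ (t + T) = θ t + 2 * π :=
    add_period_of_hasDerivAt_periodic (lipschitzWith_const_add_mul_cos (2*lam) v₃)
      (fun x => by simp) hθ (by rw [hT, hθ0, zero_add])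
  have hyT := sub_eq_of_hasDerivAt_comp_periodic hy cos_periodic hθT s
  have hzT := mul_add_log_eq_of_hasDerivAt hz hθ hpos (s + T) s
  rw [hθT, cos_add_two_pi] at hzT
  exact ⟨by linarith, mul_left_cancel₀ hv.ne' (add_right_cancel hzT), hθT s⟩

/-- Case `λ > v₃/2` of the generating-curve system with `θ 0 = 0`:
`θ' ≥ 2λ - v₃ > 0`, `θ` is strictly increasing with `θ(s) → ±∞` as `s → ±∞`,
there is a unique `T > 0` with `θ T = 2π`, and for such `T` the solution satisfies
`y(s+T) = y(s) + y(T)`, `z(s+T) = z(s)`, `θ(s+T) = θ(s) + 2π`; in particular the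
curve `(y, z)` is invariant under the horizontal translation by `(y T, 0)`. -/
theorem stmt6 (lam v₃ : ℝ) (hv : 0 < v₃) (hlam : v₃ / 2 < lam)
    (y z θ : ℝ → ℝ)
    (hy : ∀ s, HasDerivAt y (Real.cos (θ s)) s)
    (hz : ∀ s, HasDerivAt z (Real.sin (θ s)) s)
    (hθ : ∀ s, HasDerivAt θ (2*lam + v₃ * Real.cos (θ s)) s)
    (hy0 : y 0 = 0) (hz0 : z 0 = 0) (hθ0 : θ 0 = 0) :
    (0 < 2*lam - v₃) ∧
    (∀ s, 2*lam - v₃ ≤ 2*lam + v₃ * Real.cos (θ s)) ∧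
    StrictMono θ ∧
    Tendsto θ atTop atTop ∧ Tendsto θ atBot atBot ∧
    (∃! T : ℝ, 0 < T ∧ θ T = 2 * Real.pi) ∧
    (∀ T : ℝ, 0 < T → θ T = 2 * Real.pi →
      ∀ s, y (s + T) = y s + y T ∧ z (s + T) = z s ∧ θ (s + T) = θ s + 2 * Real.pi) :=
  stmt6_general lam v₃ hv hlam y z θ hy hz hθ hy0 hθ0
end

section
/- Let λ > 0 and let (x, z, θ) solve x' = cos θ, z' = sin θ, θ' = 2λ + cos θ − sin θ/x for s > 0, with x(0) = 0, θ(0) = 0, x(s) > 0 for s > 0. Then 0 < θ(s) < π for all s > 0 and x(s) < 1/λ for all s > 0. -/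
/-!
Along the profile, `F = x sin θ - λ x²` satisfies `F' = x cos² θ ≥ 0` and `F(0) = 0`; since
`θ` is small near `s = 0`, `F' > 0` there, so `F > 0` on `(0, ∞)`, i.e. `sin θ > λ x > 0`.
Thus `θ` never reaches `0` or `π`, and as it starts inside `(0, π)` it stays there by
continuity. Finally `λ x < sin θ ≤ 1`.
-/

open Real Set Filter Topology

lemma continuousOn_Ici_of_hasDerivAt {F F' : ℝ → ℝ} {a : ℝ}
    (hc : ContinuousWithinAt F (Ici a) a) (hF : ∀ t, a < t → HasDerivAt F (F' t) t) :
    ContinuousOn F (Ici a) := by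
  intro t ht
  rcases (mem_Ici.mp ht).eq_or_lt with rfl | hat
  · exact hc
  · exact (hF t hat).continuousAt.continuousWithinAt

lemma lt_of_hasDerivAt_nonneg_of_eventually_pos {F F' : ℝ → ℝ} {a : ℝ}
    (hc : ContinuousWithinAt F (Ici a) a) (hF : ∀ t, a < t → HasDerivAt F (F' t) t)
    (hF'_nonneg : ∀ t, a < t → 0 ≤ F' t) (hF'_pos : ∀ᶠ t in 𝓝[>] a, 0 < F' t) :
    ∀ s, a < s → F a < F s := by
  intro s hs
  obtain ⟨u, hu, hpos⟩ := mem_nhdsGT_iff_exists_Ioo_subset.mp hF'_pos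
  set c := min u s
  have hac : a < c := lt_min hu hs
  have hcont := continuousOn_Ici_of_hasDerivAt hc hF
  have hmono : MonotoneOn F (Ici a) :=
    monotoneOn_of_hasDerivWithinAt_nonneg (convex_Ici a) hcont
      (fun t ht ↦ (hF t (interior_Ici.le ht)).hasDerivWithinAt)
      (fun t ht ↦ hF'_nonneg t (interior_Ici.le ht))
  have hstrict : StrictMonoOn F (Icc a c) := by
    refine strictMonoOn_of_hasDerivWithinAt_pos (f' := F') (convex_Icc a c)
      (hcont.mono Icc_subset_Ici_self) (fun t ht ↦ ?_) (fun t ht ↦ ?_)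
    · rw [interior_Icc] at ht
      exact (hF t ht.1).hasDerivWithinAt
    · rw [interior_Icc] at ht
      exact hpos ⟨ht.1, ht.2.trans_le (min_le_left u s)⟩
  calc F a < F c := hstrict (left_mem_Icc.mpr hac.le) (right_mem_Icc.mpr hac.le) hac
    _ ≤ F s := hmono hac.le (le_of_lt (hac.trans_le (min_le_right u s))) (min_le_right u s)

lemma mapsTo_Ioo_of_isPreconnected {S : Set ℝ} {f : ℝ → ℝ} {a u v : ℝ}
    (hS : IsPreconnected S) (hf : ContinuousOn f S) (ha : a ∈ S) (hfa : f a ∈ Ioo u v)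
    (hu : ∀ t ∈ S, f t ≠ u) (hv : ∀ t ∈ S, f t ≠ v) : MapsTo f S (Ioo u v) := by
  have himage : IsPreconnected (f '' S) := hS.image f hf
  intro t ht
  by_contra hout
  rcases not_and_or.mp hout with hle | hge
  · obtain ⟨r, hr, hfr⟩ := himage.Icc_subset (mem_image_of_mem f ht) (mem_image_of_mem f ha)
      ⟨not_lt.mp hle, hfa.1.le⟩
    exact hu r hr hfr
  · obtain ⟨r, hr, hfr⟩ := himage.Icc_subset (mem_image_of_mem f ha) (mem_image_of_mem f ht)
      ⟨hfa.2.le, not_lt.mp hge⟩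
    exact hv r hr hfr

lemma hasDerivAt_mul_sin_sub_mul_sq {x θ : ℝ → ℝ} {lam s : ℝ} (hxs : x s ≠ 0)
    (hx : HasDerivAt x (cos (θ s)) s)
    (hθ : HasDerivAt θ (2 * lam + cos (θ s) - sin (θ s) / x s) s) :
    HasDerivAt (fun t ↦ x t * sin (θ t) - lam * x t ^ 2) (x s * cos (θ s) ^ 2) s := by
  refine ((hx.mul hθ.sin).sub ((hx.pow 2).const_mul lam)).congr_deriv ?_
  field_simp
  ring

theorem stmt18_general (lam : ℝ) (hlam : 0 < lam) (x θ : ℝ → ℝ)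
    (hxpos : ∀ s : ℝ, 0 < s → 0 < x s)
    (hx : ∀ s : ℝ, 0 < s → HasDerivAt x (Real.cos (θ s)) s)
    (hθ : ∀ s : ℝ, 0 < s → HasDerivAt θ
      (2*lam + Real.cos (θ s) - Real.sin (θ s) / x s) s)
    (hx0 : x 0 = 0) (hθ0 : θ 0 = 0)
    (hxc : ContinuousWithinAt x (Set.Ici 0) 0)
    (hθc : ContinuousWithinAt θ (Set.Ici 0) 0) :
    ∀ s : ℝ, 0 < s → (0 < θ s ∧ θ s < Real.pi) ∧ x s < 1/lam := by
  have hθ_small : ∀ᶠ t in 𝓝[>] 0, θ t ∈ Ioo (-(π / 2)) (π / 2) := by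
    refine (hθc.mono Ioi_subset_Ici_self).tendsto.eventually (Ioo_mem_nhds ?_ ?_) <;>
      rw [hθ0] <;> linarith [pi_pos]
  have hF : ∀ s, 0 < s → 0 < x s * sin (θ s) - lam * x s ^ 2 := by
    simpa [hx0] using lt_of_hasDerivAt_nonneg_of_eventually_pos
      ((hxc.mul (continuous_sin.continuousAt.comp_continuousWithinAt hθc)).sub
        ((hxc.pow 2).const_mul lam))
      (fun t ht ↦ hasDerivAt_mul_sin_sub_mul_sq (hxpos t ht).ne' (hx t ht) (hθ t ht))
      (fun t ht ↦ mul_nonneg (hxpos t ht).le (sq_nonneg _))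
      ((eventually_mem_nhdsWithin.and hθ_small).mono fun t ⟨ht, hθt⟩ ↦
        mul_pos (hxpos t ht) (pow_pos (cos_pos_of_mem_Ioo hθt) 2))
  have hsin : ∀ s, 0 < s → lam * x s < sin (θ s) := fun s hs ↦ by
    nlinarith [hF s hs, hxpos s hs]
  have hsin_pos : ∀ s, 0 < s → 0 < sin (θ s) := fun s hs ↦
    (mul_pos hlam (hxpos s hs)).trans (hsin s hs)
  obtain ⟨a, ha, hθa⟩ := (eventually_mem_nhdsWithin.and hθ_small).exists
  have hθ_range : MapsTo θ (Ioi 0) (Ioo 0 π) := by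
    refine mapsTo_Ioo_of_isPreconnected isPreconnected_Ioi
      (fun t ht ↦ (hθ t ht).continuousAt.continuousWithinAt) ha ⟨?_, by linarith [hθa.2, pi_pos]⟩
      (fun t ht h ↦ by simpa [h] using hsin_pos t ht)
      (fun t ht h ↦ by simpa [h] using hsin_pos t ht)
    by_contra! hθa_nonpos
    exact (sin_nonpos_of_nonpos_of_neg_pi_le hθa_nonpos (by linarith [hθa.1, pi_pos])).not_gt
      (hsin_pos a ha)
  intro s hs
  refine ⟨hθ_range hs, ?_⟩
  rw [lt_div_iff₀ hlam]
  linarith [hsin s hs, sin_le_one (θ s)]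

/-- Let `λ > 0` and let the profile curve of a rotational `λ`-translating soliton meet
the axis orthogonally: `x 0 = 0`, `θ 0 = 0`, `x > 0` for `s > 0`, with
`x' = cos θ`, `z' = sin θ`, `θ' = 2λ + cos θ - sin θ/x` for `s > 0`.  Then
`0 < θ(s) < π` and `x(s) < 1/λ` for all `s > 0`. -/
theorem stmt18 (lam : ℝ) (hlam : 0 < lam) (x z θ : ℝ → ℝ)
    (hxpos : ∀ s : ℝ, 0 < s → 0 < x s)
    (hx : ∀ s : ℝ, 0 < s → HasDerivAt x (Real.cos (θ s)) s)
    (hz : ∀ s : ℝ, 0 < s → HasDerivAt z (Real.sin (θ s)) s)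
    (hθ : ∀ s : ℝ, 0 < s → HasDerivAt θ
      (2*lam + Real.cos (θ s) - Real.sin (θ s) / x s) s)
    (hx0 : x 0 = 0) (hθ0 : θ 0 = 0)
    (hxc : ContinuousWithinAt x (Set.Ici 0) 0)
    (hθc : ContinuousWithinAt θ (Set.Ici 0) 0) :
    ∀ s : ℝ, 0 < s → (0 < θ s ∧ θ s < Real.pi) ∧ x s < 1/lam :=
  stmt18_general lam hlam x θ hxpos hx hθ hx0 hθ0 hxc hθc
end
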